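/- arXiv:1701.04725 — 2 statements merged into one kernel-verified Lean document; each statement's English description precedes it below -/
import Mathlib

section
/- Let k < 0, let a < b, and let g : [a,b] → ℝ be a C², positive-valued, distance-like function satisfying g''(t) ≤ √(−k)·(1 − (g'(t))²)·coth(√(−k)·g(t)) for all t ∈ [a,b]. Then for all t₁, t₂ with a ≤ t₁ < t₂ ≤ b and all u ∈ ℝ, v > 0 such that g_k(t₁; u, v) = g(t₁) and g_k(t₂; u, v) = g(t₂), one has g(t) ≥ g_k(t; u, v) for all t ∈ [t₁, t₂]. -/
open Set

noncomputable def arcosh (x : ℝ) : ℝ := Real.log (x + Real.sqrt (x ^ 2 - 1))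

noncomputable def coth (x : ℝ) : ℝ := Real.cosh x / Real.sinh x

/-- The hyperbolic comparison function. -/
noncomputable def gHyp (k u v t : ℝ) : ℝ :=
  (1 / Real.sqrt (-k)) *
    arcosh (((u ^ 2 + v ^ 2) * Real.exp (-(Real.sqrt (-k)) * t) +
      Real.exp (Real.sqrt (-k) * t)) / (2 * v))

/-!
Put `s = √(-k)`. Then `ψ = cosh (s · g_k(·; u, v))` is a combination of `e^{±st}`, so
`ψ'' = s² ψ`, while the differential inequality says exactly that `φ = cosh (s · g)` satisfies
`φ'' ≤ s² φ`. Hence `w = φ - ψ` satisfies `w'' ≤ s² w` and vanishes at `t₁` and `t₂`. At a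
negative interior minimum of `w` we would have `w'' < 0`, which the second-derivative test rules
out; so `w ≥ 0` on `[t₁, t₂]`, and since `cosh` is increasing on `[0, ∞)`, `g ≥ g_k` there.
-/

open Filter Topology
open Real hiding arcosh

theorem IsLocalMin.deriv_deriv_nonneg {f : ℝ → ℝ} {x₀ : ℝ} (h : IsLocalMin f x₀)
    (hc : ContinuousAt f x₀) : 0 ≤ deriv (deriv f) x₀ := by
  by_contra! hneg
  have hconst : f =ᶠ[𝓝 x₀] fun _ ↦ f x₀ := by
    filter_upwards [h, isLocalMax_of_deriv_deriv_neg hneg h.deriv_eq_zero hc] with x hmin hmax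
    exact le_antisymm hmax hmin
  exact hneg.ne (by rw [hconst.deriv.deriv_eq]; simp)

theorem nonneg_on_Icc_of_deriv_deriv_neg {w : ℝ → ℝ} {p q : ℝ} (hw : ContinuousOn w (Icc p q))
    (hp : 0 ≤ w p) (hq : 0 ≤ w q) (hneg : ∀ x ∈ Ioo p q, w x < 0 → deriv (deriv w) x < 0) :
    ∀ x ∈ Icc p q, 0 ≤ w x := by
  intro x hx
  obtain ⟨x₀, hx₀, hmin⟩ := isCompact_Icc.exists_isMinOn ⟨x, hx⟩ hw
  by_contra! hwx
  have hw₀ : w x₀ < 0 := (hmin hx).trans_lt hwx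
  have hx₀' : x₀ ∈ Ioo p q :=
    ⟨hx₀.1.lt_of_ne (by rintro rfl; linarith), hx₀.2.lt_of_ne (by rintro rfl; linarith)⟩
  have hnhds : Icc p q ∈ 𝓝 x₀ := Icc_mem_nhds hx₀'.1 hx₀'.2
  exact (hneg x₀ hx₀' hw₀).not_ge
    ((hmin.isLocalMin hnhds).deriv_deriv_nonneg (hw.continuousAt hnhds))

theorem deriv_deriv_eq_of_hasDerivAt {f f' : ℝ → ℝ} {f'' x : ℝ}
    (hf : ∀ᶠ y in 𝓝 x, HasDerivAt f (f' y) y) (hf' : HasDerivAt f' f'' x) :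
    deriv (deriv f) x = f'' := by
  have hderiv : deriv f =ᶠ[𝓝 x] f' := hf.mono fun _ hy ↦ hy.deriv
  rw [hderiv.deriv_eq, hf'.deriv]

theorem hasDerivAt_derivWithin_Icc {f : ℝ → ℝ} {n : WithTop ℕ∞} {a b x : ℝ}
    (hf : ContDiffOn ℝ n f (Icc a b)) (hn : n ≠ 0) (hx : x ∈ Ioo a b) :
    HasDerivAt f (derivWithin f (Icc a b) x) x := by
  have hnhds : Icc a b ∈ 𝓝 x := Icc_mem_nhds hx.1 hx.2
  rw [derivWithin_of_mem_nhds hnhds]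
  exact ((hf.differentiableOn hn x (mem_of_mem_nhds hnhds)).differentiableAt hnhds).hasDerivAt

theorem hasDerivAt_sinh_comp_mul {f f' : ℝ → ℝ} {f'' x : ℝ} (hf : HasDerivAt f (f' x) x)
    (hf' : HasDerivAt f' f'' x) :
    HasDerivAt (fun y ↦ sinh (f y) * f' y) (cosh (f x) * f' x ^ 2 + sinh (f x) * f'') x :=
  (hf.sinh.mul hf').congr_deriv (by ring)

theorem cosh_mul_sq_add_sinh_mul_le {s y y' y'' : ℝ} (hs : 0 < s) (hy : 0 < y)
    (h : y'' ≤ s * (1 - y' ^ 2) * coth (s * y)) :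
    cosh (s * y) * (s * y') ^ 2 + sinh (s * y) * (s * y'') ≤ s ^ 2 * cosh (s * y) := by
  have hsinh : 0 < sinh (s * y) := sinh_pos_iff.2 (mul_pos hs hy)
  have hsinh_term : sinh (s * y) * (s * y'') ≤ s ^ 2 * (1 - y' ^ 2) * cosh (s * y) := by
    calc sinh (s * y) * (s * y'') ≤ sinh (s * y) * (s * (s * (1 - y' ^ 2) * coth (s * y))) := by
          gcongr
      _ = s ^ 2 * (1 - y' ^ 2) * cosh (s * y) := by
          rw [coth]; field_simp
  linarith

noncomputable def expCombo (s A B t : ℝ) : ℝ := A * exp (-s * t) + B * exp (s * t)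

theorem hasDerivAt_expCombo (s A B t : ℝ) :
    HasDerivAt (expCombo s A B) (expCombo s (-s * A) (s * B) t) t := by
  have h₁ : HasDerivAt (fun y ↦ -s * y) (-s) t := by simpa using (hasDerivAt_id t).const_mul (-s)
  have h₂ : HasDerivAt (fun y ↦ s * y) s t := by simpa using (hasDerivAt_id t).const_mul s
  exact ((h₁.exp.const_mul A).add (h₂.exp.const_mul B)).congr_deriv (by simp only [expCombo]; ring)

theorem hasDerivAt_deriv_expCombo (s A B t : ℝ) :
    HasDerivAt (expCombo s (-s * A) (s * B)) (s ^ 2 * expCombo s A B t) t :=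
  (hasDerivAt_expCombo s _ _ t).congr_deriv (by simp only [expCombo]; ring)

theorem one_le_expCombo {s A B : ℝ} (hA : 0 ≤ A) (hAB : 1 ≤ 4 * A * B) (t : ℝ) :
    1 ≤ expCombo s A B t := by
  have hinv : exp (-s * t) * exp (s * t) = 1 := by rw [← exp_add]; simp
  have hmul : exp (s * t) * expCombo s A B t = A + B * exp (s * t) ^ 2 := by
    simp only [expCombo]
    linear_combination A * hinv
  refine le_of_mul_le_mul_left ?_ (exp_pos (s * t))
  rw [mul_one, hmul]
  nlinarith [sq_nonneg (2 * B * exp (s * t) - 1)]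

theorem arcosh_eq_real_arcosh : arcosh = Real.arcosh := rfl

theorem gHyp_eq_arcosh_expCombo (k u v t : ℝ) :
    gHyp k u v t =
      1 / √(-k) * arcosh (expCombo √(-k) ((u ^ 2 + v ^ 2) / (2 * v)) (1 / (2 * v)) t) := by
  simp only [gHyp, expCombo]
  congr 2
  ring

theorem one_le_expCombo_gHyp (s u : ℝ) {v : ℝ} (hv : 0 < v) (t : ℝ) :
    1 ≤ expCombo s ((u ^ 2 + v ^ 2) / (2 * v)) (1 / (2 * v)) t :=
  one_le_expCombo (by positivity) (by field_simp; nlinarith [sq_nonneg u]) t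

theorem gHyp_nonneg (k u : ℝ) {v : ℝ} (hv : 0 < v) (t : ℝ) : 0 ≤ gHyp k u v t := by
  rw [gHyp_eq_arcosh_expCombo, arcosh_eq_real_arcosh]
  exact mul_nonneg (by positivity) (Real.arcosh_nonneg (one_le_expCombo_gHyp _ u hv t))

theorem cosh_sqrt_neg_mul_gHyp {k : ℝ} (hk : k < 0) (u : ℝ) {v : ℝ} (hv : 0 < v) (t : ℝ) :
    cosh (√(-k) * gHyp k u v t) = expCombo √(-k) ((u ^ 2 + v ^ 2) / (2 * v)) (1 / (2 * v)) t := by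
  have hs : √(-k) ≠ 0 := (Real.sqrt_pos.2 (neg_pos.2 hk)).ne'
  rw [gHyp_eq_arcosh_expCombo, ← mul_assoc, mul_one_div_cancel hs, one_mul, arcosh_eq_real_arcosh]
  exact Real.cosh_arcosh (one_le_expCombo_gHyp _ u hv t)

theorem continuous_expCombo (s A B : ℝ) : Continuous (expCombo s A B) :=
  continuous_iff_continuousAt.2 fun t ↦ (hasDerivAt_expCombo s A B t).continuousAt

theorem deriv_deriv_cosh_mul_sub_expCombo_le {g : ℝ → ℝ} {a b s A B x : ℝ} (hs : 0 < s)
    (hg : ContDiffOn ℝ 2 g (Icc a b)) (hx : x ∈ Ioo a b) (hgx : 0 < g x)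
    (hineq : derivWithin (derivWithin g (Icc a b)) (Icc a b) x ≤
      s * (1 - derivWithin g (Icc a b) x ^ 2) * coth (s * g x)) :
    deriv (deriv fun y ↦ cosh (s * g y) - expCombo s A B y) x ≤
      s ^ 2 * (cosh (s * g x) - expCombo s A B x) := by
  set g' := derivWithin g (Icc a b)
  have hg' : ContDiffOn ℝ 1 g' (Icc a b) :=
    hg.derivWithin (uniqueDiffOn_Icc (hx.1.trans hx.2)) (by norm_num)
  have hderiv : ∀ y ∈ Ioo a b, HasDerivAt (fun y ↦ cosh (s * g y) - expCombo s A B y)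
      (sinh (s * g y) * (s * g' y) - expCombo s (-s * A) (s * B) y) y :=
    fun y hy ↦ ((hasDerivAt_derivWithin_Icc hg two_ne_zero hy).const_mul s).cosh.sub
      (hasDerivAt_expCombo s A B y)
  rw [deriv_deriv_eq_of_hasDerivAt (eventually_of_mem (Ioo_mem_nhds hx.1 hx.2) hderiv)
    ((hasDerivAt_sinh_comp_mul ((hasDerivAt_derivWithin_Icc hg two_ne_zero hx).const_mul s)
      ((hasDerivAt_derivWithin_Icc hg' one_ne_zero hx).const_mul s)).sub
      (hasDerivAt_deriv_expCombo s A B x))]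
  linarith [cosh_mul_sq_add_sinh_mul_le hs hgx hineq]

theorem hyp_comparison_of_diff_ineq_rev_general (k : ℝ) (hk : k < 0) (a b : ℝ) (g : ℝ → ℝ)
    (hC2 : ContDiffOn ℝ 2 g (Icc a b))
    (hpos : ∀ t ∈ Icc a b, 0 < g t)
    (hineq : ∀ t ∈ Icc a b, (derivWithin (derivWithin g (Icc a b)) (Icc a b)) t ≤ Real.sqrt (-k) * (1 - ((derivWithin g (Icc a b)) t) ^ 2) * coth (Real.sqrt (-k) * g t)) :
    ∀ t₁ t₂, a ≤ t₁ → t₁ < t₂ → t₂ ≤ b → ∀ u v : ℝ, 0 < v →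
      gHyp k u v t₁ = g t₁ → gHyp k u v t₂ = g t₂ →
      ∀ t ∈ Icc t₁ t₂, g t ≥ gHyp k u v t := by
  intro t₁ t₂ ht₁ _ ht₂ u v hv hg₁ hg₂ t ht
  set s := √(-k)
  have hs : 0 < s := Real.sqrt_pos.2 (neg_pos.2 hk)
  set ψ := expCombo s ((u ^ 2 + v ^ 2) / (2 * v)) (1 / (2 * v))
  have hψ : ∀ x, cosh (s * gHyp k u v x) = ψ x := cosh_sqrt_neg_mul_gHyp hk u hv
  have hIcc : Icc t₁ t₂ ⊆ Icc a b := Icc_subset_Icc ht₁ ht₂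
  have hw : ∀ x ∈ Icc t₁ t₂, 0 ≤ cosh (s * g x) - ψ x := by
    refine nonneg_on_Icc_of_deriv_deriv_neg ?_ (by rw [← hg₁, hψ, sub_self])
      (by rw [← hg₂, hψ, sub_self]) fun x hx hwx ↦ ?_
    · exact (continuous_cosh.comp_continuousOn (continuousOn_const.mul
        (hC2.continuousOn.mono hIcc))).sub (continuous_expCombo ..).continuousOn
    · have hx' := Ioo_subset_Ioo ht₁ ht₂ hx
      exact (deriv_deriv_cosh_mul_sub_expCombo_le hs hC2 hx' (hpos x (Ioo_subset_Icc_self hx'))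
        (hineq x (Ioo_subset_Icc_self hx'))).trans_lt (mul_neg_of_pos_of_neg (by positivity) hwx)
  have hle : cosh (s * gHyp k u v t) ≤ cosh (s * g t) := by
    linarith [hψ t, hw t ht]
  rw [Real.cosh_le_cosh, abs_of_nonneg (mul_nonneg hs.le (gHyp_nonneg k u hv t)),
    abs_of_nonneg (mul_nonneg hs.le (hpos t (hIcc ht)).le)] at hle
  exact le_of_mul_le_mul_left hle hs

theorem hyp_comparison_of_diff_ineq_rev (k : ℝ) (hk : k < 0) (a b : ℝ) (hab : a < b) (g : ℝ → ℝ)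
    (hC2 : ContDiffOn ℝ 2 g (Icc a b))
    (hpos : ∀ t ∈ Icc a b, 0 < g t)
    (hnonexp : ∀ t₁ ∈ Icc a b, ∀ t₂ ∈ Icc a b, |g t₁ - g t₂| ≤ |t₁ - t₂|)
    (hdistlike : ∀ t₁ ∈ Icc a b, ∀ t₂ ∈ Icc a b, |t₁ - t₂| ≤ g t₁ + g t₂)
    (hineq : ∀ t ∈ Icc a b, (derivWithin (derivWithin g (Icc a b)) (Icc a b)) t ≤ Real.sqrt (-k) * (1 - ((derivWithin g (Icc a b)) t) ^ 2) * coth (Real.sqrt (-k) * g t)) :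
    ∀ t₁ t₂, a ≤ t₁ → t₁ < t₂ → t₂ ≤ b → ∀ u v : ℝ, 0 < v →
      gHyp k u v t₁ = g t₁ → gHyp k u v t₂ = g t₂ →
      ∀ t ∈ Icc t₁ t₂, g t ≥ gHyp k u v t :=
  hyp_comparison_of_diff_ineq_rev_general k hk a b g hC2 hpos hineq
end

section
/- Let k > 0, let 0 ≤ a < b with √k · b < π/2, and let g : [a,b] → ℝ be a C², positive-valued, distance-like function with √k · g(t) < π/2 for all t ∈ [a,b]. Suppose that for every t₁, t₂ with a ≤ t₁ < t₂ ≤ b there exist u, v ∈ ℝ with u² + v² < 1/k, g_k(t₁; u, v) = g(t₁), g_k(t₂; u, v) = g(t₂), and g(t) ≤ g_k(t; u, v) for all t ∈ [t₁, t₂]. Then g''(t) ≥ √k·(1 − (g'(t))²)·cot(√k·g(t)) holds for all t ∈ [a,b]. -/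
/-!
With `w = cos (√k g)` the inequality reads `w'' + k w ≤ 0`, while `cos (√k g_k(·; u, v))` is the
solution `√k (u cos (√k t) + v sin (√k t))` of `W'' + k W = 0`; the comparison hypothesis says that
`w` lies above such a `W` between any two points where they agree. If `w'' + k w > 0` near `t₀`,
then `h = w - W ≥ 0` on a short interval around `t₀`, vanishes at its ends and has
`h'' + k h > 0` there. Dividing by a positive solution `c` of `c'' + k c = 0`, the quotient `h / c`
must rise and then fall, so the Wronskian `h' c - h c'` goes from `≥ 0` to `≤ 0`; but its
derivative is `(h'' + k h) c > 0`.
-/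

open Set

/-- The spherical comparison function. -/
noncomputable def gSph (k u v t : ℝ) : ℝ :=
  (1 / Real.sqrt k) *
    Real.arccos (Real.sqrt k * (u * Real.cos (Real.sqrt k * t) + v * Real.sin (Real.sqrt k * t)))

open Real Filter Topology

noncomputable def sinusoid (ω A B t : ℝ) : ℝ :=
  A * cos (ω * t) + B * sin (ω * t)

theorem hasDerivAt_sinusoid (ω A B t : ℝ) :
    HasDerivAt (sinusoid ω A B) (sinusoid ω (ω * B) (-(ω * A)) t) t := by
  have hlin : HasDerivAt (fun x => ω * x) ω t := by simpa using (hasDerivAt_id t).const_mul ω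
  refine ((hlin.cos.const_mul A).add (hlin.sin.const_mul B)).congr_deriv ?_
  simp only [sinusoid]
  ring

theorem hasDerivAt_sinusoid_deriv (ω A B t : ℝ) :
    HasDerivAt (sinusoid ω (ω * B) (-(ω * A))) (-ω ^ 2 * sinusoid ω A B t) t := by
  refine (hasDerivAt_sinusoid ω (ω * B) (-(ω * A)) t).congr_deriv ?_
  simp only [sinusoid]
  ring

theorem continuous_sinusoid (ω A B : ℝ) : Continuous (sinusoid ω A B) := by
  unfold sinusoid
  fun_prop

theorem sinusoid_cos_sin_self (ω t : ℝ) : sinusoid ω (cos (ω * t)) (sin (ω * t)) t = 1 := by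
  rw [sinusoid, ← sq, ← sq, cos_sq_add_sin_sq]

theorem sinusoid_sq_le (ω A B t : ℝ) : sinusoid ω A B t ^ 2 ≤ A ^ 2 + B ^ 2 := by
  rw [sinusoid]
  have hpyth := sin_sq_add_cos_sq (ω * t)
  nlinarith [sq_nonneg (A * sin (ω * t) - B * cos (ω * t))]

theorem exists_deriv_nonneg_deriv_nonpos_of_nonneg {f f' : ℝ → ℝ} {t₁ t₂ : ℝ} (ht : t₁ < t₂)
    (hf : ContinuousOn f (Icc t₁ t₂)) (hf' : ∀ x ∈ Ioo t₁ t₂, HasDerivAt f (f' x) x)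
    (hnonneg : ∀ x ∈ Icc t₁ t₂, 0 ≤ f x) (h₁ : f t₁ = 0) (h₂ : f t₂ = 0) :
    ∃ ξ₁ ξ₂, t₁ < ξ₁ ∧ ξ₁ < ξ₂ ∧ ξ₂ < t₂ ∧ 0 ≤ f' ξ₁ ∧ f' ξ₂ ≤ 0 := by
  obtain ⟨m, hm₁, hm₂⟩ := exists_between ht
  have hfm : 0 ≤ f m := hnonneg m ⟨hm₁.le, hm₂.le⟩
  obtain ⟨ξ₁, hξ₁, hslope₁⟩ := exists_hasDerivAt_eq_slope f f' hm₁
    (hf.mono (Icc_subset_Icc_right hm₂.le)) fun x hx => hf' x ⟨hx.1, hx.2.trans hm₂⟩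
  obtain ⟨ξ₂, hξ₂, hslope₂⟩ := exists_hasDerivAt_eq_slope f f' hm₂
    (hf.mono (Icc_subset_Icc_left hm₁.le)) fun x hx => hf' x ⟨hm₁.trans hx.1, hx.2⟩
  refine ⟨ξ₁, ξ₂, hξ₁.1, hξ₁.2.trans hξ₂.1, hξ₂.2, ?_, ?_⟩
  · rw [hslope₁, h₁, sub_zero]
    exact div_nonneg hfm (sub_nonneg.2 hm₁.le)
  · rw [hslope₂, h₂, zero_sub]
    exact div_nonpos_of_nonpos_of_nonneg (neg_nonpos.2 hfm) (sub_nonneg.2 hm₂.le)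

theorem exists_mem_Ioo_deriv2_add_mul_nonpos {h h' h'' c c' : ℝ → ℝ} {k t₁ t₂ : ℝ}
    (ht : t₁ < t₂) (hh : ContinuousOn h (Icc t₁ t₂))
    (hh' : ∀ x ∈ Ioo t₁ t₂, HasDerivAt h (h' x) x)
    (hh'' : ∀ x ∈ Ioo t₁ t₂, HasDerivAt h' (h'' x) x)
    (hc : ∀ x ∈ Icc t₁ t₂, HasDerivAt c (c' x) x)
    (hc' : ∀ x ∈ Icc t₁ t₂, HasDerivAt c' (-k * c x) x)
    (hcpos : ∀ x ∈ Icc t₁ t₂, 0 < c x) (hnonneg : ∀ x ∈ Icc t₁ t₂, 0 ≤ h x)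
    (h₁ : h t₁ = 0) (h₂ : h t₂ = 0) :
    ∃ τ ∈ Ioo t₁ t₂, h'' τ + k * h τ ≤ 0 := by
  have hq : ∀ x ∈ Ioo t₁ t₂,
      HasDerivAt (fun x => h x / c x) ((h' x * c x - h x * c' x) / c x ^ 2) x := fun x hx =>
    (hh' x hx).div (hc x (Ioo_subset_Icc_self hx)) (hcpos x (Ioo_subset_Icc_self hx)).ne'
  have hq_cont : ContinuousOn (fun x => h x / c x) (Icc t₁ t₂) :=
    hh.div (fun x hx => (hc x hx).continuousAt.continuousWithinAt) fun x hx => (hcpos x hx).ne'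
  obtain ⟨ξ₁, ξ₂, hξ₁, hξ₁₂, hξ₂, hq₁, hq₂⟩ := exists_deriv_nonneg_deriv_nonpos_of_nonneg ht
    hq_cont hq (fun x hx => div_nonneg (hnonneg x hx) (hcpos x hx).le)
    (by simp only [h₁, zero_div]) (by simp only [h₂, zero_div])
  have hsub : Icc ξ₁ ξ₂ ⊆ Ioo t₁ t₂ := Icc_subset_Ioo hξ₁ hξ₂
  have hwr₁ : 0 ≤ h' ξ₁ * c ξ₁ - h ξ₁ * c' ξ₁ := by
    simpa using (le_div_iff₀ (pow_pos (hcpos ξ₁ ⟨hξ₁.le, (hξ₁₂.trans hξ₂).le⟩) 2)).1 hq₁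
  have hwr₂ : h' ξ₂ * c ξ₂ - h ξ₂ * c' ξ₂ ≤ 0 := by
    simpa using (div_le_iff₀ (pow_pos (hcpos ξ₂ ⟨(hξ₁.trans hξ₁₂).le, hξ₂.le⟩) 2)).1 hq₂
  have hwr : ∀ x ∈ Ioo t₁ t₂, HasDerivAt (fun x => h' x * c x - h x * c' x)
      ((h'' x + k * h x) * c x) x := by
    intro x hx
    refine (((hh'' x hx).mul (hc x (Ioo_subset_Icc_self hx))).sub
      ((hh' x hx).mul (hc' x (Ioo_subset_Icc_self hx)))).congr_deriv ?_
    ring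
  obtain ⟨τ, hτ, hslope⟩ := exists_hasDerivAt_eq_slope _ _ hξ₁₂
    (fun x hx => (hwr x (hsub hx)).continuousAt.continuousWithinAt)
    fun x hx => hwr x (hsub (Ioo_subset_Icc_self hx))
  have hτ' : τ ∈ Ioo t₁ t₂ := hsub (Ioo_subset_Icc_self hτ)
  refine ⟨τ, hτ', nonpos_of_mul_nonpos_left ?_ (hcpos τ (Ioo_subset_Icc_self hτ'))⟩
  rw [hslope]
  exact div_nonpos_of_nonpos_of_nonneg (by linarith) (sub_nonneg.2 hξ₁₂.le)

theorem exists_Icc_subset_of_mem_nhdsWithin_Icc {a b t : ℝ} {s : Set ℝ} (hab : a < b)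
    (ht : t ∈ Icc a b) (hs : s ∈ 𝓝[Icc a b] t) :
    ∃ t₁ t₂, a ≤ t₁ ∧ t₁ < t₂ ∧ t₂ ≤ b ∧ Icc t₁ t₂ ⊆ s := by
  obtain ⟨ε, hε, hball⟩ := Metric.mem_nhdsWithin_iff.1 hs
  refine ⟨max a (t - ε / 2), min b (t + ε / 2), le_max_left _ _, ?_, min_le_left _ _, ?_⟩
  · simp only [max_lt_iff, lt_min_iff]
    refine ⟨⟨?_, ?_⟩, ?_, ?_⟩ <;> linarith [ht.1, ht.2]
  · rintro x ⟨hx₁, hx₂⟩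
    rw [max_le_iff] at hx₁
    rw [le_min_iff] at hx₂
    refine hball ⟨?_, hx₁.1, hx₂.1⟩
    rw [Metric.mem_ball, Real.dist_eq, abs_lt]
    constructor <;> linarith

theorem deriv2_add_sq_mul_nonpos_of_sinusoid_le {w w' w'' : ℝ → ℝ} {a b ω : ℝ} (hab : a < b)
    (hw : ∀ t ∈ Icc a b, HasDerivWithinAt w (w' t) (Icc a b) t)
    (hw' : ∀ t ∈ Icc a b, HasDerivWithinAt w' (w'' t) (Icc a b) t)
    (hw'' : ContinuousOn w'' (Icc a b))
    (hcmp : ∀ t₁ t₂, a ≤ t₁ → t₁ < t₂ → t₂ ≤ b → ∃ A B : ℝ,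
      sinusoid ω A B t₁ = w t₁ ∧ sinusoid ω A B t₂ = w t₂ ∧
      ∀ t ∈ Icc t₁ t₂, sinusoid ω A B t ≤ w t)
    {t : ℝ} (ht : t ∈ Icc a b) : w'' t + ω ^ 2 * w t ≤ 0 := by
  by_contra! hF
  set c := sinusoid ω (cos (ω * t)) (sin (ω * t))
  have hw_cont : ContinuousOn w (Icc a b) := fun x hx => (hw x hx).continuousWithinAt
  have hc_cont : Continuous c := continuous_sinusoid _ _ _
  have hnear : {x | 0 < w'' x + ω ^ 2 * w x ∧ 0 < c x} ∈ 𝓝[Icc a b] t :=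
    (((hw''.add (continuousOn_const.mul hw_cont)) t ht).eventually (lt_mem_nhds hF)).and
      (hc_cont.continuousWithinAt.eventually
        (lt_mem_nhds (by simp only [c, sinusoid_cos_sin_self, one_pos])))
  obtain ⟨t₁, t₂, ht₁, ht₁₂, ht₂, hsub⟩ := exists_Icc_subset_of_mem_nhdsWithin_Icc hab ht hnear
  obtain ⟨A, B, heq₁, heq₂, hle⟩ := hcmp t₁ t₂ ht₁ ht₁₂ ht₂
  have hint : ∀ x ∈ Ioo t₁ t₂, Icc a b ∈ 𝓝 x := fun x hx =>
    Icc_mem_nhds (ht₁.trans_lt hx.1) (hx.2.trans_le ht₂)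
  have hIcc : Icc t₁ t₂ ⊆ Icc a b := Icc_subset_Icc ht₁ ht₂
  obtain ⟨τ, hτ, hτF⟩ := exists_mem_Ioo_deriv2_add_mul_nonpos (k := ω ^ 2)
    (h := fun x => w x - sinusoid ω A B x)
    (h' := fun x => w' x - sinusoid ω (ω * B) (-(ω * A)) x)
    (h'' := fun x => w'' x + ω ^ 2 * sinusoid ω A B x) ht₁₂
    ((hw_cont.mono hIcc).sub (continuous_sinusoid ω A B).continuousOn)
    (fun x hx => ((hw x (hIcc (Ioo_subset_Icc_self hx))).hasDerivAt (hint x hx)).sub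
      (hasDerivAt_sinusoid ω A B x))
    (fun x hx => (((hw' x (hIcc (Ioo_subset_Icc_self hx))).hasDerivAt (hint x hx)).sub
      (hasDerivAt_sinusoid_deriv ω A B x)).congr_deriv (by ring))
    (fun x _ => hasDerivAt_sinusoid _ _ _ x) (fun x _ => hasDerivAt_sinusoid_deriv _ _ _ x)
    (fun x hx => (hsub hx).2) (fun x hx => sub_nonneg.2 (hle x hx))
    (sub_eq_zero.2 heq₁.symm) (sub_eq_zero.2 heq₂.symm)
  have hFτ := (hsub (Ioo_subset_Icc_self hτ)).1
  linarith

theorem sqrt_mul_gSph {k : ℝ} (hk : 0 < k) (u v t : ℝ) :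
    √k * gSph k u v t = arccos (sinusoid √k (√k * u) (√k * v) t) := by
  rw [gSph, ← mul_assoc, mul_one_div_cancel (sqrt_pos.2 hk).ne', one_mul, sinusoid]
  ring_nf

theorem cos_sqrt_mul_gSph {k u v : ℝ} (hk : 0 < k) (huv : u ^ 2 + v ^ 2 ≤ 1 / k) (t : ℝ) :
    cos (√k * gSph k u v t) = sinusoid √k (√k * u) (√k * v) t := by
  have hsq : sinusoid √k (√k * u) (√k * v) t ^ 2 ≤ 1 := by
    calc _ ≤ (√k * u) ^ 2 + (√k * v) ^ 2 := sinusoid_sq_le _ _ _ _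
      _ = k * (u ^ 2 + v ^ 2) := by rw [mul_pow, mul_pow, sq_sqrt hk.le]; ring
      _ ≤ 1 := by rwa [← le_div_iff₀' hk]
  rw [sqrt_mul_gSph hk, cos_arccos (abs_le.1 ((sq_le_one_iff_abs_le_one _).1 hsq)).1
    (abs_le.1 ((sq_le_one_iff_abs_le_one _).1 hsq)).2]

theorem cos_sqrt_mul_gSph_le {k u v t y : ℝ} (hk : 0 < k) (hy₀ : 0 ≤ y)
    (hy : y ≤ gSph k u v t) : cos (√k * gSph k u v t) ≤ cos (√k * y) :=
  cos_le_cos_of_nonneg_of_le_pi (by positivity) (sqrt_mul_gSph hk u v t ▸ arccos_le_pi _)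
    (mul_le_mul_of_nonneg_left hy (sqrt_nonneg k))

theorem mul_one_sub_sq_mul_cot_le {r θ p q : ℝ} (hr : 0 < r) (hθ : 0 < sin θ)
    (h : -(cos θ * (r * p)) * (r * p) + -sin θ * (r * q) + r ^ 2 * cos θ ≤ 0) :
    r * (1 - p ^ 2) * cot θ ≤ q := by
  have hr' : r * (r * (1 - p ^ 2) * cos θ - q * sin θ) ≤ 0 := by linear_combination h
  rw [cot_eq_cos_div_sin, mul_div_assoc', div_le_iff₀ hθ]
  linarith [nonpos_of_mul_nonpos_right hr' hr]

theorem diff_ineq_of_sph_comparison_general (k : ℝ) (hk : 0 < k) (a b : ℝ) (hab : a < b)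
    (g : ℝ → ℝ)
    (hC2 : ContDiffOn ℝ 2 g (Icc a b))
    (hpos : ∀ t ∈ Icc a b, 0 < g t)
    (hsmall : ∀ t ∈ Icc a b, Real.sqrt k * g t < Real.pi / 2)
    (hcmp : ∀ t₁ t₂, a ≤ t₁ → t₁ < t₂ → t₂ ≤ b →
      ∃ u v : ℝ, u ^ 2 + v ^ 2 < 1 / k ∧
      gSph k u v t₁ = g t₁ ∧ gSph k u v t₂ = g t₂ ∧
      ∀ t ∈ Icc t₁ t₂, g t ≤ gSph k u v t) :
    ∀ t ∈ Icc a b, (derivWithin (derivWithin g (Icc a b)) (Icc a b)) t ≥ Real.sqrt k * (1 - ((derivWithin g (Icc a b)) t) ^ 2) * Real.cot (Real.sqrt k * g t) := by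
  intro t ht
  have hs : UniqueDiffOn ℝ (Icc a b) := uniqueDiffOn_Icc hab
  have hC1 : ContDiffOn ℝ 1 (derivWithin g (Icc a b)) (Icc a b) := hC2.derivWithin hs le_rfl
  have hg := fun x hx => ((hC2.differentiableOn two_ne_zero) x hx).hasDerivWithinAt
  have hg' := fun x hx => ((hC1.differentiableOn one_ne_zero) x hx).hasDerivWithinAt
  have hg_cont := hC2.continuousOn
  have hg'_cont := hC1.continuousOn
  have hg''_cont := hC1.continuousOn_derivWithin hs le_rfl
  have hcos_cmp : ∀ t₁ t₂, a ≤ t₁ → t₁ < t₂ → t₂ ≤ b → ∃ A B : ℝ,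
      sinusoid √k A B t₁ = cos (√k * g t₁) ∧ sinusoid √k A B t₂ = cos (√k * g t₂) ∧
      ∀ x ∈ Icc t₁ t₂, sinusoid √k A B x ≤ cos (√k * g x) := by
    intro t₁ t₂ ht₁ ht₁₂ ht₂
    obtain ⟨u, v, huv, he₁, he₂, hle⟩ := hcmp t₁ t₂ ht₁ ht₁₂ ht₂
    refine ⟨√k * u, √k * v, by rw [← cos_sqrt_mul_gSph hk huv.le, he₁],
      by rw [← cos_sqrt_mul_gSph hk huv.le, he₂], fun x hx => ?_⟩
    rw [← cos_sqrt_mul_gSph hk huv.le]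
    exact cos_sqrt_mul_gSph_le hk (hpos x (Icc_subset_Icc ht₁ ht₂ hx)).le (hle x hx)
  have key := deriv2_add_sq_mul_nonpos_of_sinusoid_le hab
    (fun x hx => ((hg x hx).const_mul √k).cos)
    (fun x hx => ((hg x hx).const_mul √k).sin.neg.mul ((hg' x hx).const_mul √k))
    (by fun_prop) hcos_cmp ht
  simp only [Pi.neg_apply] at key
  have hsin : 0 < sin (√k * g t) := sin_pos_of_pos_of_lt_pi
    (mul_pos (sqrt_pos.2 hk) (hpos t ht)) (by linarith [hsmall t ht, pi_pos])
  exact mul_one_sub_sq_mul_cot_le (sqrt_pos.2 hk) hsin key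

theorem diff_ineq_of_sph_comparison (k : ℝ) (hk : 0 < k) (a b : ℝ) (ha : 0 ≤ a) (hab : a < b)
    (hb : Real.sqrt k * b < Real.pi / 2) (g : ℝ → ℝ)
    (hC2 : ContDiffOn ℝ 2 g (Icc a b))
    (hpos : ∀ t ∈ Icc a b, 0 < g t)
    (hnonexp : ∀ t₁ ∈ Icc a b, ∀ t₂ ∈ Icc a b, |g t₁ - g t₂| ≤ |t₁ - t₂|)
    (hdistlike : ∀ t₁ ∈ Icc a b, ∀ t₂ ∈ Icc a b, |t₁ - t₂| ≤ g t₁ + g t₂)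
    (hsmall : ∀ t ∈ Icc a b, Real.sqrt k * g t < Real.pi / 2)
    (hcmp : ∀ t₁ t₂, a ≤ t₁ → t₁ < t₂ → t₂ ≤ b →
      ∃ u v : ℝ, u ^ 2 + v ^ 2 < 1 / k ∧
      gSph k u v t₁ = g t₁ ∧ gSph k u v t₂ = g t₂ ∧
      ∀ t ∈ Icc t₁ t₂, g t ≤ gSph k u v t) :
    ∀ t ∈ Icc a b, (derivWithin (derivWithin g (Icc a b)) (Icc a b)) t ≥ Real.sqrt k * (1 - ((derivWithin g (Icc a b)) t) ^ 2) * Real.cot (Real.sqrt k * g t) :=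
  diff_ineq_of_sph_comparison_general k hk a b hab g hC2 hpos hsmall hcmp
end
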